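/- arXiv:1707.07227 — 3 statements merged into one kernel-verified Lean document; each statement's English description precedes it below -/
import Mathlib

section
/- If k, m, n are positive integers with n > m and F_k = P_m · P_n, then |(2√2/(√5 · P_m)) · α^k · γ^{−n} − 1| ≤ 36√2/(√5 · γ^{2n}). -/
/-- The Pell sequence: P 0 = 0, P 1 = 1, P (n+2) = 2 * P (n+1) + P n. -/
def pell : ℕ → ℕ
  | 0 => 0
  | 1 => 1
  | n + 2 => 2 * pell (n + 1) + pell n

lemma pell_one_le : ∀ n, 1 ≤ pell (n + 1) := by
  intro n
  induction n with
  | zero => simp [pell]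
  | succ n ih =>
    show 1 ≤ 2 * pell (n + 1) + pell n
    omega

lemma pell_binet : ∀ n : ℕ,
    2 * Real.sqrt 2 * (pell n : ℝ) = (1 + Real.sqrt 2) ^ n - (1 - Real.sqrt 2) ^ n := by
  have h2 : Real.sqrt 2 ^ 2 = 2 := Real.sq_sqrt (by norm_num)
  intro n
  induction n using Nat.twoStepInduction with
  | zero => simp [pell]
  | one => simp [pell]; ring
  | more n ih1 ih2 =>
    show 2 * Real.sqrt 2 * ((2 * pell (n+1) + pell n : ℕ) : ℝ) = _
    push_cast
    have e1 : (1 + Real.sqrt 2) ^ (n + 2) = (1 + Real.sqrt 2) ^ n * (1 + Real.sqrt 2)^2 := by ring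
    have e2 : (1 - Real.sqrt 2) ^ (n + 2) = (1 - Real.sqrt 2) ^ n * (1 - Real.sqrt 2)^2 := by ring
    rw [e1, e2]
    have e3 : (1 + Real.sqrt 2) ^ (n+1) = (1 + Real.sqrt 2) ^ n * (1 + Real.sqrt 2) := by ring
    have e4 : (1 - Real.sqrt 2) ^ (n+1) = (1 - Real.sqrt 2) ^ n * (1 - Real.sqrt 2) := by ring
    rw [e3, e4] at ih2
    linear_combination 2*ih2 + ih1 + ((1-Real.sqrt 2)^n - (1+Real.sqrt 2)^n) * h2

lemma fib_le_gold_pow : ∀ k : ℕ, (Nat.fib k : ℝ) ≤ ((1 + Real.sqrt 5) / 2) ^ k := by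
  have h5 : Real.sqrt 5 ^ 2 = 5 := Real.sq_sqrt (by norm_num)
  have h5' : 2 < Real.sqrt 5 := by nlinarith [Real.sqrt_nonneg 5]
  intro k
  induction k using Nat.twoStepInduction with
  | zero => simp
  | one => simp; nlinarith
  | more k ih1 ih2 =>
    rw [Nat.fib_add_two]
    push_cast
    have hφ : ((1 + Real.sqrt 5) / 2) * ((1 + Real.sqrt 5) / 2) = (1 + Real.sqrt 5) / 2 + 1 := by
      nlinarith
    have e2 : ((1 + Real.sqrt 5) / 2) ^ (k + 1) = ((1 + Real.sqrt 5) / 2) ^ k * ((1 + Real.sqrt 5) / 2) := by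
      ring
    have e3 : ((1 + Real.sqrt 5) / 2) ^ (k + 2)
        = ((1 + Real.sqrt 5) / 2) ^ k * ((1 + Real.sqrt 5) / 2) + ((1 + Real.sqrt 5) / 2) ^ k := by
      have : ((1 + Real.sqrt 5) / 2) ^ (k + 2)
          = ((1 + Real.sqrt 5) / 2) ^ k * (((1 + Real.sqrt 5) / 2) * ((1 + Real.sqrt 5) / 2)) := by ring
      rw [this, hφ]; ring
    rw [e2] at ih2
    rw [e3]
    linarith

set_option maxHeartbeats 1000000 in
lemma main_aux (r2 r5 Pm Pn F Φ Ψ G D : ℝ)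
    (h2 : r2^2 = 2) (h5 : r5^2 = 5) (h2' : 1 < r2) (h2'' : r2 < 3/2)
    (h5' : 2 < r5) (h5'' : r5 < 9/4)
    (hPm1 : 1 ≤ Pm) (hPn1 : 1 ≤ Pn) (hG1 : 1 ≤ G)
    (hfib : F = (Φ - Ψ)/r5) (hF : F = Pm * Pn) (hfible : F ≤ Φ)
    (hbn : 2*r2*Pn = G - D)
    (hΨ : |Ψ| * Φ = 1) (hD : |D| * G = 1) :
    |(2 * r2 / (r5 * Pm)) * Φ * G⁻¹ - 1| ≤ 36 * r2 / (r5 * G^2) := by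
  have hr5pos : (0:ℝ) < r5 := by linarith
  have hr2pos : (0:ℝ) < r2 := by linarith
  have hPmpos : (0:ℝ) < Pm := by linarith
  have hGpos : (0:ℝ) < G := by linarith
  have hfib' : Φ - Ψ = r5 * F := by rw [hfib]; field_simp
  have key : 2 * r2 * (Φ - Ψ) = r5 * Pm * (G - D) := by
    rw [hfib', hF, ← hbn]; ring
  have hΛ : (2 * r2 / (r5 * Pm)) * Φ * G⁻¹ - 1
      = (2 * r2 * Ψ - r5 * Pm * D) / (r5 * Pm * G) := by
    field_simp
    linear_combination key
  rw [hΛ]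
  have hΨnn : 0 ≤ |Ψ| := abs_nonneg _
  have hDnn : 0 ≤ |D| := abs_nonneg _
  have hΨk : |Ψ| * (Pm * Pn) ≤ 1 := by
    calc |Ψ| * (Pm * Pn) = |Ψ| * F := by rw [hF]
    _ ≤ |Ψ| * Φ := mul_le_mul_of_nonneg_left hfible hΨnn
    _ = 1 := hΨ
  have hD1 : |D| ≤ 1 := by nlinarith
  have hDlb : -1 ≤ D := by nlinarith [neg_abs_le D]
  have hPnG : G ≤ (3 + 2*r2) * Pn := by linarith [le_abs_self D]
  have hnum : |2 * r2 * Ψ - r5 * Pm * D| ≤ 2 * r2 * |Ψ| + r5 * Pm * |D| := by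
    calc |2 * r2 * Ψ - r5 * Pm * D| ≤ |2 * r2 * Ψ| + |r5 * Pm * D| := abs_sub _ _
    _ = 2 * r2 * |Ψ| + r5 * Pm * |D| := by
      rw [abs_mul, abs_mul, abs_mul, abs_mul]
      rw [abs_of_nonneg (show (0:ℝ) ≤ 2 by norm_num), abs_of_nonneg (le_of_lt hr2pos),
          abs_of_nonneg (le_of_lt hr5pos), abs_of_nonneg (le_of_lt hPmpos)]
  have hdenpos : 0 < r5 * Pm * G := by positivity
  rw [abs_div, abs_of_pos hdenpos, div_le_div_iff₀ hdenpos (by positivity)]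
  have step1 : |Ψ| * G ≤ (3 + 2*r2) * Pm := by
    have e1 : |Ψ| * G * (Pm * Pn) ≤ (3 + 2*r2) * Pn := by
      calc |Ψ| * G * (Pm * Pn) = |Ψ| * (Pm * Pn) * G := by ring
      _ ≤ 1 * G := mul_le_mul_of_nonneg_right hΨk (le_of_lt hGpos)
      _ = G := one_mul G
      _ ≤ (3 + 2*r2) * Pn := hPnG
    have s2 : |Ψ| * G * Pm ≤ 3 + 2*r2 := by nlinarith [e1, hPn1]
    nlinarith [s2, mul_nonneg hΨnn (le_of_lt hGpos), hPm1]
  have hnumeric : 2*r2*(3+2*r2) + r5 ≤ 36*r2 := by nlinarith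
  calc |2 * r2 * Ψ - r5 * Pm * D| * (r5 * G ^ 2)
      ≤ (2 * r2 * |Ψ| + r5 * Pm * |D|) * (r5 * G ^ 2) := by
        apply mul_le_mul_of_nonneg_right hnum; positivity
  _ = 2 * r2 * r5 * (|Ψ| * G) * G + r5 * Pm * r5 * (|D| * G) * G := by ring
  _ = 2 * r2 * r5 * (|Ψ| * G) * G + r5 * Pm * r5 * G := by rw [hD]; ring
  _ ≤ 2 * r2 * r5 * ((3 + 2*r2) * Pm) * G + r5 * Pm * r5 * G := by
        have := mul_le_mul_of_nonneg_right (mul_le_mul_of_nonneg_left step1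
          (by positivity : (0:ℝ) ≤ 2 * r2 * r5)) (le_of_lt hGpos)
        linarith
  _ ≤ 36 * r2 * (r5 * Pm * G) := by
        nlinarith [mul_le_mul_of_nonneg_right hnumeric
          (le_of_lt (by positivity : (0:ℝ) < r5 * Pm * G))]

/-- If k, m, n are positive integers with n > m and F_k = P_m · P_n, then
|(2√2/(√5·P_m))·α^k·γ^{−n} − 1| ≤ 36√2/(√5·γ^{2n}), where α = (1+√5)/2 and γ = 1+√2. -/
theorem linear_form_FPP_2 (k m n : ℕ) (hk : 0 < k) (hm : 0 < m) (hmn : n > m)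
    (h : Nat.fib k = pell m * pell n) :
    |(2 * Real.sqrt 2 / (Real.sqrt 5 * (pell m : ℝ))) * ((1 + Real.sqrt 5) / 2) ^ k *
        (1 + Real.sqrt 2) ^ (-(n : ℤ)) - 1|
      ≤ 36 * Real.sqrt 2 / (Real.sqrt 5 * (1 + Real.sqrt 2) ^ (2 * n)) := by
  have h2 : Real.sqrt 2 ^ 2 = 2 := Real.sq_sqrt (by norm_num)
  have h5 : Real.sqrt 5 ^ 2 = 5 := Real.sq_sqrt (by norm_num)
  have h2' : 1 < Real.sqrt 2 := by nlinarith [Real.sqrt_nonneg 2]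
  have h2'' : Real.sqrt 2 < 3/2 := by nlinarith [Real.sqrt_nonneg 2]
  have h5' : 2 < Real.sqrt 5 := by nlinarith [Real.sqrt_nonneg 5]
  have h5'' : Real.sqrt 5 < 9/4 := by nlinarith [Real.sqrt_nonneg 5]
  have hzpow : (1 + Real.sqrt 2 : ℝ) ^ (-(n:ℤ)) = ((1 + Real.sqrt 2) ^ n)⁻¹ := by
    rw [zpow_neg, zpow_natCast]
  have hpow2 : (1 + Real.sqrt 2 : ℝ) ^ (2*n) = ((1 + Real.sqrt 2) ^ n)^2 := by
    rw [← pow_mul, mul_comm 2 n, pow_mul]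
  rw [hzpow, hpow2]
  have hPm1 : (1:ℝ) ≤ (pell m : ℝ) := by
    obtain ⟨m', rfl⟩ := Nat.exists_eq_add_of_lt hm
    exact_mod_cast pell_one_le _
  have hPn1 : (1:ℝ) ≤ (pell n : ℝ) := by
    have : 0 < n := lt_trans hm hmn
    obtain ⟨n', rfl⟩ := Nat.exists_eq_add_of_lt this
    exact_mod_cast pell_one_le _
  have hγ1 : (1:ℝ) < 1 + Real.sqrt 2 := by linarith
  apply main_aux (Real.sqrt 2) (Real.sqrt 5) (pell m : ℝ) (pell n : ℝ) (Nat.fib k : ℝ)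
    (((1 + Real.sqrt 5) / 2) ^ k) (((1 - Real.sqrt 5) / 2) ^ k)
    ((1 + Real.sqrt 2) ^ n) ((1 - Real.sqrt 2) ^ n)
    h2 h5 h2' h2'' h5' h5'' hPm1 hPn1
    (one_le_pow₀ (le_of_lt hγ1))
    (Real.coe_fib_eq k)
    (by rw [h]; push_cast; ring)
    (fib_le_gold_pow k)
    (pell_binet n)
    ?_ ?_
  · rw [abs_pow, ← mul_pow]
    have : |(1 - Real.sqrt 5)/2| = (Real.sqrt 5 - 1)/2 := by
      rw [abs_of_nonpos (by linarith)]; ring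
    rw [this]
    have : (Real.sqrt 5 - 1)/2 * ((1 + Real.sqrt 5)/2) = 1 := by nlinarith
    rw [this, one_pow]
  · rw [abs_pow, ← mul_pow]
    have : |1 - Real.sqrt 2| = Real.sqrt 2 - 1 := by
      rw [abs_of_nonpos (by linarith)]; ring
    rw [this]
    have : (Real.sqrt 2 - 1) * (1 + Real.sqrt 2) = 1 := by nlinarith
    rw [this, one_pow]
end

section
/- If k, m, n are positive integers with P_k = F_m · F_n, then 1 + c₂(m + n − 4) ≤ k ≤ 2 + c₂(m + n − 2), where c₂ = log α / log γ; in particular, if moreover m ≤ n then k ≤ 3n. -/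
noncomputable def Phi : ℝ := (1 + Real.sqrt 5) / 2
noncomputable def Gam : ℝ := 1 + Real.sqrt 2

lemma sqrt5_lt : Real.sqrt 5 ≤ 2.238 := by
  rw [show (2.238:ℝ) = Real.sqrt (2.238^2) by rw [Real.sqrt_sq]; norm_num]
  exact Real.sqrt_le_sqrt (by norm_num)

lemma sqrt5_gt : (2:ℝ) ≤ Real.sqrt 5 := by
  rw [show (2:ℝ) = Real.sqrt 4 by rw [show (4:ℝ) = 2^2 by norm_num, Real.sqrt_sq]; norm_num]
  exact Real.sqrt_le_sqrt (by norm_num)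

lemma sqrt2_gt : (1.414:ℝ) ≤ Real.sqrt 2 := by
  rw [show (1.414:ℝ) = Real.sqrt (1.414^2) by rw [Real.sqrt_sq]; norm_num]
  exact Real.sqrt_le_sqrt (by norm_num)

lemma phi_one_le : (1:ℝ) ≤ Phi := by
  have := sqrt5_gt; unfold Phi; linarith

lemma phi_pos : (0:ℝ) < Phi := lt_of_lt_of_le one_pos phi_one_le

lemma phi_le : Phi ≤ 1.619 := by
  have := sqrt5_lt; unfold Phi; linarith

lemma gam_gt_one : (1:ℝ) < Gam := by
  have := sqrt2_gt; unfold Gam; linarith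

lemma gam_pos : (0:ℝ) < Gam := lt_trans one_pos gam_gt_one

lemma gam_ge : (2.414:ℝ) ≤ Gam := by
  have := sqrt2_gt; unfold Gam; linarith

lemma phi_sq : Phi ^ 2 = Phi + 1 := by
  have h5 : Real.sqrt 5 ^ 2 = 5 := Real.sq_sqrt (by norm_num)
  unfold Phi; nlinarith [h5]

lemma gam_sq : Gam ^ 2 = 2 * Gam + 1 := by
  have h2 : Real.sqrt 2 ^ 2 = 2 := Real.sq_sqrt (by norm_num)
  unfold Gam; nlinarith [h2]

lemma fib_upper : ∀ m : ℕ, (Nat.fib (m + 1) : ℝ) ≤ Phi ^ m := by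
  intro m
  induction m using Nat.twoStepInduction with
  | zero => simp
  | one => simpa using phi_one_le
  | more m ih1 ih2 =>
    have : Phi ^ (m + 2) = Phi ^ (m+1) + Phi ^ m := by
      have : Phi ^ (m + 2) = Phi ^ m * Phi ^ 2 := by ring
      rw [this, phi_sq]; ring
    rw [this, Nat.fib_add_two]
    push_cast
    linarith

lemma fib_lower : ∀ m : ℕ, Phi ^ m ≤ (Nat.fib (m + 2) : ℝ) := by
  intro m
  induction m using Nat.twoStepInduction with
  | zero => simp
  | one =>
    have := phi_le
    simp only [pow_one, Nat.fib_add_two]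
    norm_num [Nat.fib]
    linarith
  | more m ih1 ih2 =>
    have he : Phi ^ (m + 2) = Phi ^ (m+1) + Phi ^ m := by
      have : Phi ^ (m + 2) = Phi ^ m * Phi ^ 2 := by ring
      rw [this, phi_sq]; ring
    rw [he, show m + 2 + 2 = (m + 2) + 2 by ring, Nat.fib_add_two]
    push_cast
    linarith

lemma pell_upper : ∀ k : ℕ, (pell (k + 1) : ℝ) ≤ Gam ^ k := by
  intro k
  induction k using Nat.twoStepInduction with
  | zero => simp [pell]
  | one =>
    have := gam_ge
    simp only [pow_one]
    norm_num [pell]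
    linarith
  | more k ih1 ih2 =>
    have he : Gam ^ (k + 2) = 2 * Gam ^ (k+1) + Gam ^ k := by
      have : Gam ^ (k + 2) = Gam ^ k * Gam ^ 2 := by ring
      rw [this, gam_sq]; ring
    rw [he, show k + 2 + 1 = (k + 1) + 2 by ring]
    show ((2 * pell (k + 1 + 1) + pell (k + 1) : ℕ) : ℝ) ≤ _
    push_cast
    linarith

lemma pell_lower : ∀ k : ℕ, Gam ^ k ≤ (pell (k + 2) : ℝ) := by
  intro k
  induction k using Nat.twoStepInduction with
  | zero => norm_num [pell]
  | one =>
    have h : Real.sqrt 2 ≤ 1.5 := by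
      rw [show (1.5:ℝ) = Real.sqrt (1.5^2) by rw [Real.sqrt_sq]; norm_num]
      exact Real.sqrt_le_sqrt (by norm_num)
    simp only [pow_one]
    norm_num [pell, Gam]
    linarith
  | more k ih1 ih2 =>
    have he : Gam ^ (k + 2) = 2 * Gam ^ (k+1) + Gam ^ k := by
      have : Gam ^ (k + 2) = Gam ^ k * Gam ^ 2 := by ring
      rw [this, gam_sq]; ring
    rw [he, show k + 2 + 2 = (k + 2) + 2 by ring]
    show _ ≤ ((2 * pell (k + 2 + 1) + pell (k + 2) : ℕ) : ℝ)
    push_cast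
    linarith

lemma fib_upper' (m : ℕ) (hm : 0 < m) : (Nat.fib m : ℝ) ≤ Phi ^ ((m:ℝ) - 1) := by
  obtain ⟨m', rfl⟩ := Nat.exists_eq_add_of_lt hm
  rw [show ((0 + m' + 1 : ℕ):ℝ) - 1 = (m' : ℝ) by push_cast; ring,
    Real.rpow_natCast]
  simpa using fib_upper m'

lemma fib_lower' (m : ℕ) (hm : 0 < m) : Phi ^ ((m:ℝ) - 2) ≤ (Nat.fib m : ℝ) := by
  match m, hm with
  | 1, _ =>
    rw [show ((1:ℕ):ℝ) - 2 = (-1 : ℝ) by norm_num, Real.rpow_neg_one]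
    rw [show ((Nat.fib 1 : ℕ):ℝ) = 1 by simp]
    rw [inv_le_one_iff₀]
    right; exact phi_one_le
  | (m' + 2), _ =>
    rw [show ((m' + 2 : ℕ):ℝ) - 2 = (m' : ℝ) by push_cast; ring, Real.rpow_natCast]
    exact fib_lower m'

lemma pell_upper' (k : ℕ) (hk : 0 < k) : (pell k : ℝ) ≤ Gam ^ ((k:ℝ) - 1) := by
  obtain ⟨k', rfl⟩ := Nat.exists_eq_add_of_lt hk
  rw [show ((0 + k' + 1 : ℕ):ℝ) - 1 = (k' : ℝ) by push_cast; ring, Real.rpow_natCast]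
  simpa using pell_upper k'

lemma pell_lower' (k : ℕ) (hk : 0 < k) : Gam ^ ((k:ℝ) - 2) ≤ (pell k : ℝ) := by
  match k, hk with
  | 1, _ =>
    rw [show ((1:ℕ):ℝ) - 2 = (-1 : ℝ) by norm_num, Real.rpow_neg_one]
    rw [show ((pell 1 : ℕ):ℝ) = 1 by norm_num [pell]]
    rw [inv_le_one_iff₀]
    right; exact le_of_lt gam_gt_one
  | (k' + 2), _ =>
    rw [show ((k' + 2 : ℕ):ℝ) - 2 = (k' : ℝ) by push_cast; ring, Real.rpow_natCast]
    exact pell_lower k'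

lemma c2_le : Real.log Phi / Real.log Gam ≤ 11 / 20 := by
  have hlg : 0 < Real.log Gam := Real.log_pos gam_gt_one
  rw [div_le_div_iff₀ hlg (by norm_num)]
  have h1 : Phi ^ (20:ℕ) ≤ Gam ^ (11:ℕ) := by
    calc Phi ^ (20:ℕ) ≤ (1.619:ℝ) ^ (20:ℕ) :=
          pow_le_pow_left₀ (le_of_lt phi_pos) phi_le 20
      _ ≤ (2.414:ℝ) ^ (11:ℕ) := by norm_num
      _ ≤ Gam ^ (11:ℕ) := pow_le_pow_left₀ (by norm_num) gam_ge 11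
  have h2 : Real.log (Phi ^ (20:ℕ)) ≤ Real.log (Gam ^ (11:ℕ)) :=
    Real.log_le_log (pow_pos phi_pos 20) h1
  rw [Real.log_pow, Real.log_pow] at h2
  push_cast at h2
  linarith

/-- If k, m, n are positive integers with P_k = F_m · F_n, then
1 + c₂(m + n − 4) ≤ k ≤ 2 + c₂(m + n − 2), where c₂ = log α / log γ with
α = (1+√5)/2 and γ = 1+√2; in particular, if moreover m ≤ n then k ≤ 3n. -/
theorem index_bounds_PFF (k m n : ℕ) (hk : 0 < k) (hm : 0 < m) (hn : 0 < n)
    (h : pell k = Nat.fib m * Nat.fib n) :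
    (1 + (Real.log ((1 + Real.sqrt 5) / 2) / Real.log (1 + Real.sqrt 2)) * ((m : ℝ) + n - 4)
        ≤ (k : ℝ) ∧
      (k : ℝ) ≤
        2 + (Real.log ((1 + Real.sqrt 5) / 2) / Real.log (1 + Real.sqrt 2)) * ((m : ℝ) + n - 2))
    ∧ (m ≤ n → k ≤ 3 * n) := by
  have hlg : 0 < Real.log Gam := Real.log_pos gam_gt_one
  have hlp : 0 ≤ Real.log Phi := Real.log_nonneg phi_one_le
  have hP : (pell k : ℝ) = (Nat.fib m : ℝ) * (Nat.fib n : ℝ) := by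
    rw [h]; push_cast; ring
  -- upper bound on k
  have hub : (k : ℝ) ≤ 2 + Real.log Phi / Real.log Gam * ((m : ℝ) + n - 2) := by
    have h1 : Gam ^ ((k:ℝ) - 2) ≤ Phi ^ ((m:ℝ) - 1 + ((n:ℝ) - 1)) := by
      rw [Real.rpow_add phi_pos]
      calc Gam ^ ((k:ℝ) - 2) ≤ (pell k : ℝ) := pell_lower' k hk
        _ = (Nat.fib m : ℝ) * (Nat.fib n : ℝ) := hP
        _ ≤ Phi ^ ((m:ℝ) - 1) * Phi ^ ((n:ℝ) - 1) :=
          mul_le_mul (fib_upper' m hm) (fib_upper' n hn) (by positivity)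
            (le_of_lt (Real.rpow_pos_of_pos phi_pos _))
    have h2 := Real.log_le_log (Real.rpow_pos_of_pos gam_pos _) h1
    rw [Real.log_rpow gam_pos, Real.log_rpow phi_pos] at h2
    have h3 : (k:ℝ) - 2 ≤ Real.log Phi / Real.log Gam * ((m : ℝ) + n - 2) := by
      rw [div_mul_eq_mul_div, le_div_iff₀ hlg]
      calc ((k:ℝ) - 2) * Real.log Gam ≤ ((m:ℝ) - 1 + ((n:ℝ) - 1)) * Real.log Phi := h2
        _ = Real.log Phi * ((m:ℝ) + n - 2) := by ring
    linarith
  -- lower bound on k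
  have hlb : 1 + Real.log Phi / Real.log Gam * ((m : ℝ) + n - 4) ≤ (k : ℝ) := by
    have h1 : Phi ^ ((m:ℝ) - 2 + ((n:ℝ) - 2)) ≤ Gam ^ ((k:ℝ) - 1) := by
      rw [Real.rpow_add phi_pos]
      calc Phi ^ ((m:ℝ) - 2) * Phi ^ ((n:ℝ) - 2)
          ≤ (Nat.fib m : ℝ) * (Nat.fib n : ℝ) :=
            mul_le_mul (fib_lower' m hm) (fib_lower' n hn)
              (le_of_lt (Real.rpow_pos_of_pos phi_pos _))
              (by exact_mod_cast Nat.fib_pos.mpr hm |>.le)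
        _ = (pell k : ℝ) := hP.symm
        _ ≤ Gam ^ ((k:ℝ) - 1) := pell_upper' k hk
    have h2 := Real.log_le_log (Real.rpow_pos_of_pos phi_pos _) h1
    rw [Real.log_rpow gam_pos, Real.log_rpow phi_pos] at h2
    have h3 : Real.log Phi / Real.log Gam * ((m : ℝ) + n - 4) ≤ (k:ℝ) - 1 := by
      rw [div_mul_eq_mul_div, div_le_iff₀ hlg]
      calc Real.log Phi * ((m : ℝ) + n - 4)
          = ((m:ℝ) - 2 + ((n:ℝ) - 2)) * Real.log Phi := by ring
        _ ≤ ((k:ℝ) - 1) * Real.log Gam := h2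
    linarith
  have hPhiG : Real.log ((1 + Real.sqrt 5) / 2) = Real.log Phi := rfl
  have hGamG : Real.log (1 + Real.sqrt 2) = Real.log Gam := rfl
  rw [hPhiG, hGamG]
  refine ⟨⟨hlb, hub⟩, fun hmn => ?_⟩
  -- part 2
  have hc := c2_le
  have hcpos : 0 ≤ Real.log Phi / Real.log Gam := div_nonneg hlp hlg.le
  have hmn' : (m:ℝ) ≤ (n:ℝ) := by exact_mod_cast hmn
  have hn' : (1:ℝ) ≤ (n:ℝ) := by exact_mod_cast hn
  have : (k:ℝ) ≤ 2 + (11/20) * (2*(n:ℝ) - 2) := by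
    have s1 : Real.log Phi / Real.log Gam * ((m : ℝ) + n - 2)
        ≤ Real.log Phi / Real.log Gam * (2*(n:ℝ) - 2) :=
      mul_le_mul_of_nonneg_left (by linarith) hcpos
    have s2 : Real.log Phi / Real.log Gam * (2*(n:ℝ) - 2) ≤ (11/20) * (2*(n:ℝ) - 2) :=
      mul_le_mul_of_nonneg_right hc (by linarith)
    linarith
  have hk3 : (k:ℝ) ≤ (3*n : ℕ) := by push_cast; linarith
  exact_mod_cast hk3
end

section
/- If k, m, n are positive integers with n > m and P_k = F_m · F_n, then |γ^k/(2√2) − α^{m+n}/5| ≤ 6·α^{n−m}/5. -/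
open Real goldenRatio

theorem pell_mul_two_sqrt_two : ∀ k : ℕ,
    (pell k : ℝ) * (2 * √2) = (1 + √2) ^ k - (1 - √2) ^ k
  | 0 => by simp [pell]
  | 1 => by simp [pell]; ring
  | k + 2 => by
    have hs : √2 ^ 2 = 2 := sq_sqrt zero_le_two
    simp only [pell]
    push_cast
    linear_combination 2 * pell_mul_two_sqrt_two (k + 1) + pell_mul_two_sqrt_two k
      - ((1 + √2) ^ k - (1 - √2) ^ k) * hs

theorem abs_one_add_sqrt_two_pow_div_sub_pell_le (k : ℕ) :
    |(1 + √2) ^ k / (2 * √2) - pell k| ≤ 1 / 2 := by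
  have hs : 1 < √2 := by rw [lt_sqrt zero_le_one]; norm_num
  have hs' : √2 < 2 := by rw [sqrt_lt' two_pos]; norm_num
  have hδ : |(1 - √2) ^ k| ≤ 1 := by
    rw [abs_pow]
    exact pow_le_one₀ (abs_nonneg _) (abs_le.mpr ⟨by linarith, by linarith⟩)
  have h2s2 : 0 < 2 * √2 := by positivity
  rw [eq_div_iff h2s2.ne' |>.mpr (pell_mul_two_sqrt_two k), sub_div, sub_sub_cancel, abs_div,
    abs_of_pos h2s2, div_le_iff₀ h2s2]
  linarith

theorem coe_fib_mul_fib_add (m d : ℕ) :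
    (Nat.fib m * Nat.fib (m + d) : ℝ) =
      (φ ^ (m + (m + d)) - (-1) ^ m * (φ ^ d + ψ ^ d) + ψ ^ (m + (m + d))) / 5 := by
  have h5 : √5 ^ 2 = 5 := sq_sqrt (by norm_num)
  have hm : φ ^ m * ψ ^ m = (-1) ^ m := by rw [← mul_pow, goldenRatio_mul_goldenConj]
  rw [coe_fib_eq, coe_fib_eq, div_mul_div_comm, ← sq, h5]
  congr 1
  rw [pow_add, pow_add, pow_add ψ]
  linear_combination -(φ ^ d + ψ ^ d) * hm

theorem abs_fib_mul_fib_add_sub_le (m d : ℕ) :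
    |(Nat.fib m * Nat.fib (m + d) : ℝ) - φ ^ (m + (m + d)) / 5| ≤ (φ ^ d + 2) / 5 := by
  have hψ : ∀ j : ℕ, |ψ ^ j| ≤ 1 := fun j => by
    rw [abs_pow]
    exact pow_le_one₀ (abs_nonneg _)
      (abs_le.mpr ⟨neg_one_lt_goldenConj.le, goldenConj_neg.le.trans zero_le_one⟩)
  have hsign : |((-1 : ℝ) ^ m)| = 1 := by simp
  rw [coe_fib_mul_fib_add, ← sub_div, abs_div, abs_of_pos (by norm_num : (0:ℝ) < 5)]
  gcongr
  calc |φ ^ (m + (m + d)) - (-1) ^ m * (φ ^ d + ψ ^ d) + ψ ^ (m + (m + d)) - φ ^ (m + (m + d))|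
      = |ψ ^ (m + (m + d)) - (-1) ^ m * (φ ^ d + ψ ^ d)| := by ring_nf
    _ ≤ |ψ ^ (m + (m + d))| + |(-1) ^ m * (φ ^ d + ψ ^ d)| := abs_sub _ _
    _ ≤ 1 + (|φ ^ d| + |ψ ^ d|) := by
        rw [abs_mul, hsign, one_mul]; gcongr; exacts [hψ _, abs_add_le _ _]
    _ ≤ φ ^ d + 2 := by rw [abs_of_pos (by positivity)]; linarith [hψ d]

theorem approx_PFF_general (k m n : ℕ) (hmn : n > m)
    (h : pell k = Nat.fib m * Nat.fib n) :
    |(1 + Real.sqrt 2) ^ k / (2 * Real.sqrt 2) - ((1 + Real.sqrt 5) / 2) ^ (m + n) / 5|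
      ≤ 6 * ((1 + Real.sqrt 5) / 2) ^ (n - m) / 5 := by
  obtain ⟨d, rfl⟩ := Nat.exists_eq_add_of_le hmn.le
  rw [← goldenRatio, Nat.add_sub_cancel_left]
  have hpell := abs_one_add_sqrt_two_pow_div_sub_pell_le k
  have hfib := abs_fib_mul_fib_add_sub_le m d
  rw [h, Nat.cast_mul] at hpell
  have hφ : 1 ≤ φ ^ d := one_le_pow₀ one_lt_goldenRatio.le
  calc _ ≤ 1 / 2 + (φ ^ d + 2) / 5 := (abs_sub_le _ _ _).trans (add_le_add hpell hfib)
    _ ≤ 6 * φ ^ d / 5 := by linarith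

/-- If k, m, n are positive integers with n > m and P_k = F_m · F_n, then
|γ^k/(2√2) − α^{m+n}/5| ≤ 6·α^{n−m}/5, where α = (1+√5)/2 and γ = 1+√2. -/
theorem approx_PFF (k m n : ℕ) (hk : 0 < k) (hm : 0 < m) (hmn : n > m)
    (h : pell k = Nat.fib m * Nat.fib n) :
    |(1 + Real.sqrt 2) ^ k / (2 * Real.sqrt 2) - ((1 + Real.sqrt 5) / 2) ^ (m + n) / 5|
      ≤ 6 * ((1 + Real.sqrt 5) / 2) ^ (n - m) / 5 :=
  approx_PFF_general k m n hmn h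
end
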